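/- For every real x and every δ > 0, and for every real c with |c| ≤ δ, |Φ((1+δ)x + c) − Φ(x)| ≤ 2δ, where Φ is the standard normal CDF. -/

import Mathlib

/-!
Write `Φ(b) - Φ(a) = (2π)^{-1/2} ∫_a^b e^{-t²/2} dt`. Since the density is at most `1`, `Φ` is
`1`-Lipschitz, so the shift by `c` costs at most `|c| ≤ δ`. On the segment between `x` and
`(1 + δ) x` the density is at most `e^{-x²/2}`, so the stretch costs at most
`δ |x| e^{-x²/2} ≤ δ`, because `|x| ≤ 1 + x²/2 ≤ e^{x²/2}`.
-/

open MeasureTheory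

noncomputable def stdNormalCDF (x : ℝ) : ℝ :=
  (Real.sqrt (2 * Real.pi))⁻¹ * ∫ t in Set.Iic x, Real.exp (-t ^ 2 / 2)

open Set Interval

lemma integrable_exp_neg_sq_div_two : Integrable fun t : ℝ => Real.exp (-t ^ 2 / 2) := by
  convert integrable_exp_neg_mul_sq (b := (1 : ℝ) / 2) (by norm_num) using 2 with t
  ring_nf

lemma inv_sqrt_two_mul_pi_le_one : (Real.sqrt (2 * Real.pi))⁻¹ ≤ 1 :=
  inv_le_one_of_one_le₀ <| Real.one_le_sqrt.mpr <| by nlinarith [Real.pi_gt_three]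

lemma stdNormalCDF_sub (a b : ℝ) :
    stdNormalCDF b - stdNormalCDF a =
      (Real.sqrt (2 * Real.pi))⁻¹ * ∫ t in a..b, Real.exp (-t ^ 2 / 2) := by
  rw [stdNormalCDF, stdNormalCDF, ← mul_sub,
    intervalIntegral.integral_Iic_sub_Iic integrable_exp_neg_sq_div_two.integrableOn
      integrable_exp_neg_sq_div_two.integrableOn]

lemma abs_stdNormalCDF_sub_le_mul {a b C : ℝ}
    (hC : ∀ t ∈ Ι a b, Real.exp (-t ^ 2 / 2) ≤ C) :
    |stdNormalCDF b - stdNormalCDF a| ≤ C * |b - a| := by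
  have hint : |∫ t in a..b, Real.exp (-t ^ 2 / 2)| ≤ C * |b - a| := by
    rw [← Real.norm_eq_abs]
    refine intervalIntegral.norm_integral_le_of_norm_le_const fun t ht => ?_
    simpa only [Real.norm_eq_abs, Real.abs_exp] using hC t ht
  rw [stdNormalCDF_sub, abs_mul, abs_of_pos (by positivity)]
  calc (Real.sqrt (2 * Real.pi))⁻¹ * |∫ t in a..b, Real.exp (-t ^ 2 / 2)|
      ≤ 1 * (C * |b - a|) :=
        mul_le_mul inv_sqrt_two_mul_pi_le_one hint (abs_nonneg _) zero_le_one
    _ = C * |b - a| := one_mul _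

lemma abs_stdNormalCDF_sub_le (a b : ℝ) : |stdNormalCDF b - stdNormalCDF a| ≤ |b - a| := by
  simpa using abs_stdNormalCDF_sub_le_mul (a := a) (b := b) (C := 1) fun t _ =>
    Real.exp_le_one_iff.mpr (by nlinarith [sq_nonneg t])

lemma abs_mul_exp_neg_sq_div_two_le_one (r : ℝ) : |r| * Real.exp (-r ^ 2 / 2) ≤ 1 := by
  have hr : |r| ≤ Real.exp (r ^ 2 / 2) := by
    nlinarith [Real.add_one_le_exp (r ^ 2 / 2), sq_abs r, sq_nonneg (|r| - 1)]
  rw [neg_div, Real.exp_neg, mul_inv_le_iff₀ (Real.exp_pos _), one_mul]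
  exact hr

lemma sq_le_sq_of_mem_uIoc_mul {x k t : ℝ} (hk : 1 ≤ k) (ht : t ∈ Ι x (k * x)) :
    x ^ 2 ≤ t ^ 2 := by
  rcases le_total 0 x with hx | hx
  · rw [uIoc_of_le (by nlinarith)] at ht
    nlinarith [ht.1]
  · rw [uIoc_of_ge (by nlinarith)] at ht
    nlinarith [ht.2]

lemma abs_stdNormalCDF_one_add_mul_sub_le (x : ℝ) {δ : ℝ} (hδ : 0 ≤ δ) :
    |stdNormalCDF ((1 + δ) * x) - stdNormalCDF x| ≤ δ := by
  have hC : ∀ t ∈ Ι x ((1 + δ) * x), Real.exp (-t ^ 2 / 2) ≤ Real.exp (-x ^ 2 / 2) :=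
    fun t ht => Real.exp_le_exp.mpr <| by
      linarith [sq_le_sq_of_mem_uIoc_mul (by linarith) ht]
  calc |stdNormalCDF ((1 + δ) * x) - stdNormalCDF x|
      ≤ Real.exp (-x ^ 2 / 2) * |(1 + δ) * x - x| := abs_stdNormalCDF_sub_le_mul hC
    _ = δ * (|x| * Real.exp (-x ^ 2 / 2)) := by
        rw [show (1 + δ) * x - x = δ * x by ring, abs_mul, abs_of_nonneg hδ]; ring
    _ ≤ δ * 1 := mul_le_mul_of_nonneg_left (abs_mul_exp_neg_sq_div_two_le_one x) hδ
    _ = δ := mul_one δ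

theorem stmt_4_general (x δ c : ℝ) (hc : |c| ≤ δ) :
    |stdNormalCDF ((1 + δ) * x + c) - stdNormalCDF x| ≤ 2 * δ := by
  have hshift : |stdNormalCDF ((1 + δ) * x + c) - stdNormalCDF ((1 + δ) * x)| ≤ δ := by
    have := abs_stdNormalCDF_sub_le ((1 + δ) * x) ((1 + δ) * x + c)
    rw [add_sub_cancel_left] at this
    exact this.trans hc
  have hstretch := abs_stdNormalCDF_one_add_mul_sub_le x ((abs_nonneg c).trans hc)
  calc |stdNormalCDF ((1 + δ) * x + c) - stdNormalCDF x|
      ≤ |stdNormalCDF ((1 + δ) * x + c) - stdNormalCDF ((1 + δ) * x)| +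
        |stdNormalCDF ((1 + δ) * x) - stdNormalCDF x| := abs_sub_le _ _ _
    _ ≤ δ + δ := add_le_add hshift hstretch
    _ = 2 * δ := by ring

theorem stmt_4 (x δ c : ℝ) (hδ : 0 < δ) (hc : |c| ≤ δ) :
    |stdNormalCDF ((1 + δ) * x + c) - stdNormalCDF x| ≤ 2 * δ :=
  stmt_4_general x δ c hc
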